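/- arXiv:2105.10142 — 2 statements merged into one kernel-verified Lean document; each statement's English description precedes it below -/
import Mathlib

section
/- There exists an error indicator c on a 3×3 pixel grid — namely, c is true exactly at the four corner pixels (0,0), (0,2), (2,0), (2,2) — such that every 2×2 window has error count at most 1, hence error density at most 1/4, while the unique 3×3 window has error count 4 and error density 4/9. In particular, for the density threshold α = 2/5, every 2×2 window has error density strictly below α, yet the 3×3 window has error density strictly above α; hence certifying that all k_safe×k_safe windows have density below α does not imply the same for larger window sizes. -/
/-! A `2×2` window of the `3×3` grid covers exactly one corner, while the full `3×3` window
covers all four, so the error density jumps from `1/4` up to `4/9`. -/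

def window (L W a b k : ℕ) : Finset (Fin L × Fin W) :=
  Finset.univ.filter (fun p : Fin L × Fin W =>
    a ≤ (p.1 : ℕ) ∧ (p.1 : ℕ) < a + k ∧ b ≤ (p.2 : ℕ) ∧ (p.2 : ℕ) < b + k)

def errCount (L W : ℕ) (c : Fin L × Fin W → Bool) (a b k : ℕ) : ℕ :=
  ((window L W a b k).filter (fun p => c p = true)).card

def cornerErrors (p : Fin 3 × Fin 3) : Bool :=
  ((p.1 : ℕ) = 0 ∨ (p.1 : ℕ) = 2) ∧ ((p.2 : ℕ) = 0 ∨ (p.2 : ℕ) = 2)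

theorem cornerErrors_eq_true_iff (p : Fin 3 × Fin 3) :
    cornerErrors p = true ↔
      (((p.1 : ℕ) = 0 ∨ (p.1 : ℕ) = 2) ∧ ((p.2 : ℕ) = 0 ∨ (p.2 : ℕ) = 2)) := by
  simp [cornerErrors]

theorem errCount_cornerErrors_two_le_one {a b : ℕ} (ha : a + 2 ≤ 3) (hb : b + 2 ≤ 3) :
    errCount 3 3 cornerErrors a b 2 ≤ 1 := by
  have ha' : a ≤ 1 := by omega
  have hb' : b ≤ 1 := by omega
  interval_cases a <;> interval_cases b <;> decide

theorem errCount_cornerErrors_three : errCount 3 3 cornerErrors 0 0 3 = 4 := by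
  decide

theorem errCount_cornerErrors_two_div_le {a b : ℕ} (ha : a + 2 ≤ 3) (hb : b + 2 ≤ 3) :
    (errCount 3 3 cornerErrors a b 2 : ℝ) / (2 : ℝ) ^ 2 ≤ 1 / 4 := by
  have hcount : (errCount 3 3 cornerErrors a b 2 : ℝ) ≤ 1 := by
    exact_mod_cast errCount_cornerErrors_two_le_one ha hb
  linarith

/-- Counter-example (Figure 4): on a 3×3 grid with errors exactly at the four
corners, every 2×2 window has error count at most 1 (density ≤ 1/4), while the
3×3 window has error count 4 (density 4/9); with threshold `α = 2/5`, all 2×2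
windows are strictly below `α` yet the 3×3 window is strictly above `α`. -/
theorem density_not_monotone :
    ∃ c : Fin 3 × Fin 3 → Bool,
      (∀ p : Fin 3 × Fin 3, c p = true ↔
        (((p.1 : ℕ) = 0 ∨ (p.1 : ℕ) = 2) ∧ ((p.2 : ℕ) = 0 ∨ (p.2 : ℕ) = 2))) ∧
      (∀ a b, a + 2 ≤ 3 → b + 2 ≤ 3 → errCount 3 3 c a b 2 ≤ 1) ∧
      (∀ a b, a + 2 ≤ 3 → b + 2 ≤ 3 →
        (errCount 3 3 c a b 2 : ℝ) / (2 : ℝ) ^ 2 ≤ 1 / 4) ∧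
      errCount 3 3 c 0 0 3 = 4 ∧
      (errCount 3 3 c 0 0 3 : ℝ) / (3 : ℝ) ^ 2 = 4 / 9 ∧
      (∀ a b, a + 2 ≤ 3 → b + 2 ≤ 3 →
        (errCount 3 3 c a b 2 : ℝ) / (2 : ℝ) ^ 2 < 2 / 5) ∧
      (2 / 5 : ℝ) < (errCount 3 3 c 0 0 3 : ℝ) / (3 : ℝ) ^ 2 := by
  have hdensity : (errCount 3 3 cornerErrors 0 0 3 : ℝ) / (3 : ℝ) ^ 2 = 4 / 9 := by
    rw [errCount_cornerErrors_three]
    norm_num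
  refine ⟨cornerErrors, cornerErrors_eq_true_iff, fun _ _ => errCount_cornerErrors_two_le_one,
    fun _ _ => errCount_cornerErrors_two_div_le, errCount_cornerErrors_three, hdensity,
    fun _ _ ha hb => ?_, ?_⟩
  · linarith [errCount_cornerErrors_two_div_le ha hb]
  · rw [hdensity]
    norm_num
end

section
/- Let α > 0 be a real number, let c : {0,…,L−1}×{0,…,W−1} → Bool be an error indicator on an L×W pixel grid, and let k_safe ≥ 1. For a positive integer k ≤ min(L,W), let M(k) denote the maximum error count over all k×k windows in the grid. Define a sequence of filter sizes by k₀ = min(L,W) and k_{i+1} = ⌊√(M(k_i)/α)⌋ (natural-number floor of the real square root). If for every index i with k_i ≥ k_safe one has (M(k_i) : ℝ) < α · (k_i)², then for every natural number k with k_safe ≤ k ≤ min(L,W), every k×k window in the grid has error density strictly less than α. (This is the overall soundness of the iterative refinement scheme of Section III-D: when Algorithm 1 returns safe, no filter of size at least k_safe detects an error density reaching the threshold α.) -/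
/-- The maximum error count over all `k×k` windows of the grid. -/
def maxErr (L W : ℕ) (c : Fin L × Fin W → Bool) (k : ℕ) : ℕ :=
  (Finset.range (L - k + 1) ×ˢ Finset.range (W - k + 1)).sup
    (fun ab => errCount L W c ab.1 ab.2 k)

lemma window_subset_window {L W a b k a' b' K : ℕ} (ha' : a' ≤ a) (ha : a + k ≤ a' + K)
    (hb' : b' ≤ b) (hb : b + k ≤ b' + K) : window L W a b k ⊆ window L W a' b' K := by
  intro p hp
  simp only [window, Finset.mem_filter, Finset.mem_univ, true_and] at hp ⊢
  omega

lemma errCount_le_maxErr_of_le {L W a b k K : ℕ} (c : Fin L × Fin W → Bool) (hkK : k ≤ K)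
    (ha : a + k ≤ L) (hb : b + k ≤ W) : errCount L W c a b k ≤ maxErr L W c K := by
  -- Shift the corner just enough for a `K×K` window to fit; if `K > L`, then `L - K = 0`.
  have hmem : (min a (L - K), min b (W - K)) ∈
      Finset.range (L - K + 1) ×ˢ Finset.range (W - K + 1) := by
    simp only [Finset.mem_product, Finset.mem_range]
    omega
  calc errCount L W c a b k ≤ errCount L W c (min a (L - K)) (min b (W - K)) K :=
        Finset.card_le_card <| Finset.filter_subset_filter _ <|
          window_subset_window (by omega) (by omega) (by omega) (by omega)
    _ ≤ maxErr L W c K := Finset.le_sup (f := fun ab => errCount L W c ab.1 ab.2 K) hmem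

lemma floor_sqrt_div_lt_iff {M α : ℝ} (hM : 0 ≤ M) (hα : 0 < α) (k : ℕ) :
    ⌊√(M / α)⌋₊ < k ↔ M < α * (k : ℝ) ^ 2 := by
  rw [Nat.floor_lt (Real.sqrt_nonneg _), Real.sqrt_lt (by positivity) k.cast_nonneg,
    div_lt_iff₀' hα]

lemma exists_le_apply_and_apply_succ_lt {u : ℕ → ℕ} {k : ℕ} (h0 : k ≤ u 0)
    (hdec : ∀ i, k ≤ u i → u (i + 1) < u i) : ∃ i, k ≤ u i ∧ u (i + 1) < k := by
  by_contra! hstay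
  have hge (i : ℕ) : k ≤ u i := Nat.rec h0 hstay i
  have hdrop (i : ℕ) : u i + i ≤ u 0 := by
    induction i with
    | zero => simp
    | succ i ih => have := hdec i (hge i); omega
  have := hdrop (u 0 + 1)
  omega

lemma div_sq_lt_of_lt_mul_sq {n α : ℝ} {k : ℕ} (hn : 0 ≤ n) (hα : 0 < α)
    (h : n < α * (k : ℝ) ^ 2) : n / (k : ℝ) ^ 2 < α := by
  have hk : 0 < (k : ℝ) ^ 2 := pos_of_mul_pos_right (hn.trans_lt h) hα.le
  rwa [div_lt_iff₀ hk]

theorem iterative_scheme_sound_general (L W : ℕ) (α : ℝ) (hα : 0 < α)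
    (c : Fin L × Fin W → Bool) (ksafe : ℕ)
    (ks : ℕ → ℕ) (h0 : ks 0 = min L W)
    (hstep : ∀ i, ks (i + 1) =
      Nat.floor (Real.sqrt ((maxErr L W c (ks i) : ℝ) / α)))
    (hcheck : ∀ i, ksafe ≤ ks i →
      (maxErr L W c (ks i) : ℝ) < α * (ks i : ℝ) ^ 2) :
    ∀ k a b, ksafe ≤ k → k ≤ min L W → a + k ≤ L → b + k ≤ W →
      (errCount L W c a b k : ℝ) / (k : ℝ) ^ 2 < α := by
  intro k a b hk hkmin ha hb
  have hstep_lt_iff (i n : ℕ) :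
      ks (i + 1) < n ↔ (maxErr L W c (ks i) : ℝ) < α * (n : ℝ) ^ 2 := by
    rw [hstep i, floor_sqrt_div_lt_iff (Nat.cast_nonneg _) hα]
  obtain ⟨i, hki, hlt⟩ := exists_le_apply_and_apply_succ_lt (u := ks) (h0 ▸ hkmin)
    fun i hi => (hstep_lt_iff i (ks i)).2 (hcheck i (hk.trans hi))
  have hcount : (errCount L W c a b k : ℝ) ≤ maxErr L W c (ks i) := by
    exact_mod_cast errCount_le_maxErr_of_le c hki ha hb
  exact div_sq_lt_of_lt_mul_sq (Nat.cast_nonneg _) hα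
    (hcount.trans_lt ((hstep_lt_iff i k).1 hlt))

/-- Overall soundness of the iterative refinement scheme of Section III-D:
starting from filter size `min L W` and refining via
`k_{i+1} = ⌊√(M(k_i)/α)⌋`, if the density check passes at every iteration with
`k_i ≥ k_safe`, then every window of size between `k_safe` and `min L W` has
error density strictly below `α`. -/
theorem iterative_scheme_sound (L W : ℕ) (α : ℝ) (hα : 0 < α)
    (c : Fin L × Fin W → Bool) (ksafe : ℕ) (hks : 1 ≤ ksafe)
    (ks : ℕ → ℕ) (h0 : ks 0 = min L W)
    (hstep : ∀ i, ks (i + 1) =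
      Nat.floor (Real.sqrt ((maxErr L W c (ks i) : ℝ) / α)))
    (hcheck : ∀ i, ksafe ≤ ks i →
      (maxErr L W c (ks i) : ℝ) < α * (ks i : ℝ) ^ 2) :
    ∀ k a b, ksafe ≤ k → k ≤ min L W → a + k ≤ L → b + k ≤ W →
      (errCount L W c a b k : ℝ) / (k : ℝ) ^ 2 < α :=
  iterative_scheme_sound_general L W α hα c ksafe ks h0 hstep hcheck
end
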